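/- For every rooted binary tree T with n ≥ 1 leaves, N_b(T) ≥ n - 1, with equality if and only if T is the caterpillar tree on n leaves. -/

import Mathlib

/-- Rooted binary trees: a leaf, or an internal vertex with two child subtrees. -/
inductive BTree where
  | leaf : BTree
  | node : BTree → BTree → BTree
deriving DecidableEq

namespace BTree

/-- Number of leaves of a rooted binary tree. -/
def numLeaves : BTree → ℕ
  | leaf => 1
  | node l r => numLeaves l + numLeaves r

/-- Sackin index: sum over internal vertices `v` of `n_{v_a} + n_{v_b}`. -/
def sackin : BTree → ℕ
  | leaf => 0
  | node l r => sackin l + sackin r + (numLeaves l + numLeaves r)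

/-- Colless index: sum over internal vertices `v` of `|n_{v_a} - n_{v_b}|`. -/
def colless : BTree → ℕ
  | leaf => 0
  | node l r =>
      colless l + colless r +
        (max (numLeaves l) (numLeaves r) - min (numLeaves l) (numLeaves r))

/-- `N_a`: sum over internal vertices of the larger child-subtree leaf count. -/
def Na : BTree → ℕ
  | leaf => 0
  | node l r => Na l + Na r + max (numLeaves l) (numLeaves r)

/-- `N_b`: sum over internal vertices of the smaller child-subtree leaf count. -/
def Nb : BTree → ℕ
  | leaf => 0
  | node l r => Nb l + Nb r + min (numLeaves l) (numLeaves r)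

/-- `Δ_CS = C - S`, as an integer. -/
def deltaCS (T : BTree) : ℤ := (colless T : ℤ) - (sackin T : ℤ)

/-- Caterpillar trees: every internal vertex has at least one leaf child. -/
def isCaterpillar : BTree → Prop
  | leaf => True
  | node l r => (l = leaf ∧ isCaterpillar r) ∨ (r = leaf ∧ isCaterpillar l)

/-- The fully balanced tree of height `h`. -/
def fbTree : ℕ → BTree
  | 0 => leaf
  | h + 1 => node (fbTree h) (fbTree h)

end BTree

namespace BTree

lemma one_le_numLeaves (T : BTree) : 1 ≤ numLeaves T := by
  induction T with
  | leaf => rfl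
  | node l r ihl ihr => simp only [numLeaves]; omega

lemma numLeaves_eq_one_iff {T : BTree} : numLeaves T = 1 ↔ T = leaf := by
  cases T with
  | leaf => simp [numLeaves]
  | node l r =>
    have := one_le_numLeaves l
    have := one_le_numLeaves r
    simp only [numLeaves, reduceCtorEq, iff_false]
    omega

lemma min_numLeaves_eq_one_iff {l r : BTree} :
    min (numLeaves l) (numLeaves r) = 1 ↔ l = leaf ∨ r = leaf := by
  have := one_le_numLeaves l
  have := one_le_numLeaves r
  rw [← numLeaves_eq_one_iff, ← numLeaves_eq_one_iff]
  omega

lemma isCaterpillar_node_iff {l r : BTree} :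
    isCaterpillar (node l r) ↔ (l = leaf ∨ r = leaf) ∧ isCaterpillar l ∧ isCaterpillar r := by
  simp only [isCaterpillar]
  constructor
  · rintro (⟨rfl, hr⟩ | ⟨rfl, hl⟩)
    · exact ⟨.inl rfl, trivial, hr⟩
    · exact ⟨.inr rfl, hl, trivial⟩
  · rintro ⟨rfl | rfl, hl, hr⟩
    · exact .inl ⟨rfl, hr⟩
    · exact .inr ⟨rfl, hl⟩

lemma numLeaves_sub_one_le_Nb (T : BTree) : numLeaves T - 1 ≤ Nb T := by
  induction T with
  | leaf => exact Nat.zero_le _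
  | node l r ihl ihr =>
    have := one_le_numLeaves l
    have := one_le_numLeaves r
    simp only [numLeaves, Nb]
    omega

/-- The slack `Nb - (n - 1)` at a vertex is the slack of both subtrees plus `min - 1`, a sum of
three nonnegative terms. -/
lemma Nb_node_eq_iff {l r : BTree} :
    Nb (node l r) = numLeaves (node l r) - 1 ↔
      min (numLeaves l) (numLeaves r) = 1 ∧ Nb l = numLeaves l - 1 ∧ Nb r = numLeaves r - 1 := by
  have := numLeaves_sub_one_le_Nb l
  have := numLeaves_sub_one_le_Nb r
  have := one_le_numLeaves l
  have := one_le_numLeaves r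
  simp only [numLeaves, Nb]
  omega

lemma Nb_eq_numLeaves_sub_one_iff (T : BTree) :
    Nb T = numLeaves T - 1 ↔ isCaterpillar T := by
  induction T with
  | leaf => exact iff_of_true rfl trivial
  | node l r ihl ihr =>
    rw [Nb_node_eq_iff, ihl, ihr, min_numLeaves_eq_one_iff, isCaterpillar_node_iff]

end BTree

open BTree in
/-- `N_b(T) ≥ n - 1`, with equality iff `T` is the caterpillar tree. -/
theorem Nb_ge_n_sub_one (T : BTree) :
    numLeaves T - 1 ≤ Nb T ∧ (Nb T = numLeaves T - 1 ↔ isCaterpillar T) :=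
  ⟨numLeaves_sub_one_le_Nb T, Nb_eq_numLeaves_sub_one_iff T⟩
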